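/- (Local superlinear convergence of NPGMO.) Suppose each f_i is twice continuously differentiable and μ-strongly convex for some μ > 0 and each g_i is convex. Let (x^k) be generated by the NPGMO algorithm from x⁰ and let x* be its limit (which exists and is a Pareto solution). If x^k ≠ x* for all k, then lim_{k→∞} ‖x^{k+1} − x*‖ / ‖x^k − x*‖ = 0, i.e., (x^k) converges to x* superlinearly; moreover there exists K such that the full step t_k = 1 is taken for all k ≥ K. -/

import Mathlib

open Filter Topology MeasureTheory
open scoped RealInnerProductSpace

lemma npgmo_quad_identity {n : ℕ} (H : EuclideanSpace ℝ (Fin n) →L[ℝ] EuclideanSpace ℝ (Fin n))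
    (a b : EuclideanSpace ℝ (Fin n)) (l : ℝ) :
    ⟪l•a + (1-l)•b, H (l•a + (1-l)•b)⟫ =
      l*⟪a, H a⟫ + (1-l)*⟪b, H b⟫ - l*(1-l)*⟪a-b, H (a-b)⟫ := by
  simp only [map_add, _root_.map_smul, map_sub, inner_add_left, inner_add_right, inner_sub_left,
    inner_sub_right, real_inner_smul_left, real_inner_smul_right]
  ring

lemma npgmo_taylor_aux {n : ℕ} (f : EuclideanSpace ℝ (Fin n) → ℝ)
    (f' : EuclideanSpace ℝ (Fin n) → EuclideanSpace ℝ (Fin n))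
    (f'' : EuclideanSpace ℝ (Fin n) → (EuclideanSpace ℝ (Fin n) →L[ℝ] EuclideanSpace ℝ (Fin n)))
    (hgrad : ∀ x, HasGradientAt f (f' x) x)
    (hhess : ∀ x, HasFDerivAt f' (f'' x) x)
    (z u : EuclideanSpace ℝ (Fin n)) {C : ℝ} (hC : 0 ≤ C)
    (hb : ∀ w ∈ segment ℝ z (z + u), ‖f'' w - f'' z‖ ≤ C) :
    |f (z + u) - f z - ⟪f' z, u⟫ - (1/2) * ⟪u, f'' z u⟫| ≤ C * ‖u‖^2 := by
  -- Step A : bound on the gradient increment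
  have stepA : ∀ s ∈ Set.Icc (0:ℝ) 1, ‖f' (z + s•u) - f' z - s • (f'' z u)‖ ≤ C * (s * ‖u‖) := by
    intro s hs
    have hseg : Convex ℝ (segment ℝ z (z + u)) := convex_segment _ _
    have hmem : ∀ s' ∈ Set.Icc (0:ℝ) 1, z + s'•u ∈ segment ℝ z (z + u) := by
      intro s' hs'
      refine ⟨1 - s', s', by linarith [hs'.1, hs'.2], hs'.1, by ring, ?_⟩
      module
    have key := hseg.norm_image_sub_le_of_norm_hasFDerivWithin_le
      (f := fun w => f' w - f'' z w) (f' := fun w => f'' w - f'' z)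
      (fun w _ => ((hhess w).sub ((f'' z).hasFDerivAt)).hasFDerivWithinAt)
      (fun w hw => hb w hw) (hmem 0 ⟨le_refl _, zero_le_one⟩) (hmem s hs)
    simp only [zero_smul, add_zero] at key
    have e1 : f' (z + s•u) - f'' z (z + s•u) - (f' z - f'' z z)
        = f' (z + s•u) - f' z - s • (f'' z u) := by
      simp only [map_add, _root_.map_smul]
      abel
    have e2 : ‖z + s•u - z‖ = s * ‖u‖ := by
      simp [norm_smul, abs_of_nonneg hs.1]
    rw [e1, e2] at key
    exact key
  -- Step B : 1-dimensional estimate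
  set q : ℝ := (1/2) * ⟪u, f'' z u⟫ with hq
  set ρ : ℝ → ℝ := fun s => f (z + s•u) - s * ⟪f' z, u⟫ - s^2 * q with hρ
  have hρd : ∀ s : ℝ, HasDerivAt ρ (⟪f' (z + s•u) - f' z - s • (f'' z u), u⟫) s := by
    intro s
    have hc : HasDerivAt (fun s : ℝ => z + s•u) u s := by
      simpa using ((hasDerivAt_id s).smul_const u).const_add z
    have h1 : HasDerivAt (fun s : ℝ => f (z + s•u)) (⟪f' (z + s•u), u⟫) s := by
      have h := ((hgrad (z + s•u)).hasFDerivAt.comp_hasDerivAt s hc)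
      rw [InnerProductSpace.toDual_apply_apply] at h
      exact h.congr_deriv rfl
    have h2 : HasDerivAt (fun s : ℝ => s * ⟪f' z, u⟫) (⟪f' z, u⟫) s := by
      simpa using (hasDerivAt_id s).mul_const (⟪f' z, u⟫)
    have h3 : HasDerivAt (fun s : ℝ => s^2 * q) (2 * s * q) s := by
      have := (hasDerivAt_pow 2 s).mul_const q
      simpa [pow_one] using this
    have := (h1.sub h2).sub h3
    refine this.congr_deriv ?_
    have hsym : ⟪f'' z u, u⟫ = ⟪u, f'' z u⟫ := real_inner_comm _ _
    simp only [inner_sub_left, real_inner_smul_left]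
    rw [hsym]
    ring
  have bound : ∀ s ∈ Set.Ico (0:ℝ) 1, ‖⟪f' (z + s•u) - f' z - s • (f'' z u), u⟫‖ ≤ C * ‖u‖^2 := by
    intro s hs
    have h1 : |⟪f' (z + s•u) - f' z - s • (f'' z u), u⟫|
        ≤ ‖f' (z + s•u) - f' z - s • (f'' z u)‖ * ‖u‖ := abs_real_inner_le_norm _ _
    have h2 := stepA s ⟨hs.1, hs.2.le⟩
    have h3 : C * (s * ‖u‖) * ‖u‖ ≤ C * ‖u‖^2 := by
      have h4 : s * ‖u‖ ≤ ‖u‖ := by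
        nlinarith [norm_nonneg u, hs.1, hs.2]
      nlinarith [mul_nonneg (mul_nonneg hC (norm_nonneg u)) (sub_nonneg.2 h4)]
    calc ‖⟪f' (z + s•u) - f' z - s • (f'' z u), u⟫‖
        ≤ ‖f' (z + s•u) - f' z - s • (f'' z u)‖ * ‖u‖ := h1
      _ ≤ C * (s * ‖u‖) * ‖u‖ := mul_le_mul_of_nonneg_right h2 (norm_nonneg u)
      _ ≤ C * ‖u‖^2 := h3
  have mvt := norm_image_sub_le_of_norm_deriv_le_segment'
    (f := ρ) (f' := fun s => ⟪f' (z + s•u) - f' z - s • (f'' z u), u⟫) (a := 0) (b := 1)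
    (fun s _ => (hρd s).hasDerivWithinAt) (fun s hs => bound s hs) 1 ⟨zero_le_one, le_refl _⟩
  have hρ1 : ρ 1 = f (z + u) - ⟪f' z, u⟫ - q := by
    simp only [hρ, one_smul, one_mul, one_pow]
  have hρ0 : ρ 0 = f z := by
    simp only [hρ, zero_smul, add_zero]
    norm_num
  rw [hρ1, hρ0, Real.norm_eq_abs] at mvt
  have heq : f (z + u) - ⟪f' z, u⟫ - q - f z
      = f (z + u) - f z - ⟪f' z, u⟫ - (1/2) * ⟪u, f'' z u⟫ := by rw [hq]; ring
  rw [heq] at mvt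
  rw [hq]
  linarith [mvt]

lemma npgmo_bound {m : ℕ} {α : Type*} [MetricSpace α] (hm : 0 < m) (s : Set α) (hs : IsCompact s)
    (h : Fin m → α → ℝ) (hc : ∀ i, Continuous (h i)) :
    ∃ C : ℝ, 0 ≤ C ∧ ∀ i, ∀ z ∈ s, |h i z| ≤ C := by
  have key : ∀ i : Fin m, ∃ C : ℝ, ∀ z ∈ s, |h i z| ≤ C := by
    intro i
    obtain ⟨C, hC⟩ := hs.exists_bound_of_continuousOn (hc i).continuousOn
    exact ⟨C, fun z hz => by simpa [Real.norm_eq_abs] using hC z hz⟩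
  choose C hC using key
  have hne : (Finset.univ : Finset (Fin m)).Nonempty := ⟨⟨0, hm⟩, Finset.mem_univ _⟩
  refine ⟨max 0 (Finset.univ.sup' hne C), le_max_left _ _, fun i z hz => ?_⟩
  exact le_trans (hC i z hz) (le_trans (Finset.le_sup' C (Finset.mem_univ i)) (le_max_right _ _))

set_option maxHeartbeats 8000000 in
theorem npgmo_superlinear_convergence
    {n m : ℕ} (hn : 0 < n) (hm : 0 < m) {μ : ℝ} (hμ : 0 < μ)
    (f g F : Fin m → EuclideanSpace ℝ (Fin n) → ℝ)
    (f' : Fin m → EuclideanSpace ℝ (Fin n) → EuclideanSpace ℝ (Fin n))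
    (f'' : Fin m → EuclideanSpace ℝ (Fin n) → (EuclideanSpace ℝ (Fin n) →L[ℝ] EuclideanSpace ℝ (Fin n)))
    (hgrad : ∀ i x, HasGradientAt (f i) (f' i x) x)
    (hhess : ∀ i x, HasFDerivAt (f' i) (f'' i x) x)
    (hcont : ∀ i, Continuous (f'' i))
    (hg : ∀ i, ConvexOn ℝ Set.univ (g i))
    (hF : ∀ i x, F i x = f i x + g i x)
    (hsc : ∀ i x u, μ * ‖u‖ ^ 2 ≤ ⟪u, f'' i x u⟫)
    (φ : EuclideanSpace ℝ (Fin n) → EuclideanSpace ℝ (Fin n) → ℝ)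
    (hφ : ∀ y e, φ y e = Finset.univ.sup' ⟨⟨0, hm⟩, Finset.mem_univ _⟩ fun i =>
      ⟪f' i y, e⟫ + g i (y + e) - g i y + (1/2) * ⟪e, f'' i y e⟫)
    (σ γ : ℝ) (hσ : 0 < σ ∧ σ < 1) (hγ : 0 < γ ∧ γ < 1)
    (x d : ℕ → EuclideanSpace ℝ (Fin n)) (t : ℕ → ℝ)
    (hdk : ∀ k, ∀ e : EuclideanSpace ℝ (Fin n), φ (x k) (d k) ≤ φ (x k) e)
    (hdne : ∀ k, d k ≠ 0)
    (ht : ∀ k, ∃ j : ℕ, t k = γ ^ j ∧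
      (∀ i, F i (x k + γ ^ j • d k) - F i (x k) ≤ γ ^ j * (σ * φ (x k) (d k))) ∧
      (∀ j' : ℕ, j' < j →
        ¬ ∀ i, F i (x k + γ ^ j' • d k) - F i (x k) ≤ γ ^ j' * (σ * φ (x k) (d k))))
    (hxk : ∀ k, x (k + 1) = x k + t k • d k)
    (xs : EuclideanSpace ℝ (Fin n)) (hlim : Tendsto x atTop (𝓝 xs))
    (hne : ∀ k, x k ≠ xs) :
    Tendsto (fun k => ‖x (k + 1) - xs‖ / ‖x k - xs‖) atTop (𝓝 0) ∧
    ∃ K : ℕ, ∀ k ≥ K, t k = 1 := by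
  obtain ⟨hσ0, hσ1⟩ := hσ
  obtain ⟨hγ0, hγ1⟩ := hγ
  have hne' : (Finset.univ : Finset (Fin m)).Nonempty := ⟨⟨0, hm⟩, Finset.mem_univ _⟩
  set br : EuclideanSpace ℝ (Fin n) → EuclideanSpace ℝ (Fin n) → Fin m → ℝ :=
    fun y e i => ⟪f' i y, e⟫ + g i (y + e) - g i y + (1/2) * ⟪e, f'' i y e⟫ with hbr
  have hφ' : ∀ y e, φ y e = Finset.univ.sup' hne' (br y e) := fun y e => hφ y e
  set θ : ℕ → ℝ := fun k => φ (x k) (d k) with hθ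
  -- continuity facts
  have hfc : ∀ i, Continuous (f i) :=
    fun i => continuous_iff_continuousAt.2 fun z => (hgrad i z).hasFDerivAt.differentiableAt.continuousAt
  have hf'c : ∀ i, Continuous (f' i) :=
    fun i => continuous_iff_continuousAt.2 fun z => (hhess i z).differentiableAt.continuousAt
  have hgc : ∀ i, Continuous (g i) := by
    intro i
    have := (hg i).continuousOn isOpen_univ
    rwa [continuousOn_univ] at this
  have hFc : ∀ i, Continuous (F i) := by
    intro i
    have : F i = fun z => f i z + g i z := funext (hF i)
    rw [this]
    exact (hfc i).add (hgc i)
  -- value of φ at 0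
  have hφ0 : ∀ y : EuclideanSpace ℝ (Fin n), φ y 0 = 0 := by
    intro y
    rw [hφ']
    have h1 : ∀ i ∈ Finset.univ, br y 0 i = (fun _ : Fin m => (0:ℝ)) i := by
      intro i _
      simp [hbr]
    rw [Finset.sup'_congr hne' rfl h1, Finset.sup'_const]
  -- branch below sup
  have hble : ∀ (y e : EuclideanSpace ℝ (Fin n)) i, br y e i ≤ φ y e := by
    intro y e i
    rw [hφ']
    exact Finset.le_sup' (br y e) (Finset.mem_univ i)
  -- convex combination inequality (strong convexity of φ y)
  have hcomb : ∀ k (e : EuclideanSpace ℝ (Fin n)) (l : ℝ), 0 < l → l < 1 →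
      φ (x k) (l•e + (1-l)•(d k)) ≤ l * φ (x k) e + (1-l) * θ k - μ/2*(l*(1-l))*‖e - d k‖^2 := by
    intro k e l hl0 hl1
    rw [hφ']
    apply Finset.sup'_le
    intro i _
    have hlin : ⟪f' i (x k), l•e + (1-l)•d k⟫
        = l*⟪f' i (x k), e⟫ + (1-l)*⟪f' i (x k), d k⟫ := by
      rw [inner_add_right, real_inner_smul_right, real_inner_smul_right]
    have hgpt : x k + (l•e + (1-l)•d k) = l•(x k + e) + (1-l)•(x k + d k) := by module
    have hgc' : g i (x k + (l•e + (1-l)•d k)) ≤ l * g i (x k + e) + (1-l) * g i (x k + d k) := by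
      rw [hgpt]
      have := (hg i).2 (Set.mem_univ (x k + e)) (Set.mem_univ (x k + d k))
        (show (0:ℝ) ≤ l from hl0.le) (show (0:ℝ) ≤ 1 - l by linarith)
        (show l + (1 - l) = 1 by ring)
      simpa [smul_eq_mul] using this
    have hquad := npgmo_quad_identity (f'' i (x k)) e (d k) l
    have hsc' := hsc i (x k) (e - d k)
    have hsc'' : (l*(1-l)/2) * (μ * ‖e - d k‖^2) ≤ (l*(1-l)/2) * ⟪e - d k, f'' i (x k) (e - d k)⟫ :=
      mul_le_mul_of_nonneg_left hsc' (by nlinarith)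
    have h5 : l * br (x k) e i ≤ l * φ (x k) e :=
      mul_le_mul_of_nonneg_left (hble (x k) e i) (le_of_lt hl0)
    have h6 : (1-l) * br (x k) (d k) i ≤ (1-l) * θ k :=
      mul_le_mul_of_nonneg_left (hble (x k) (d k) i) (by linarith)
    simp only [hbr] at h5 h6 ⊢
    linarith [hlin, hgc', hquad, hsc'', h5, h6]
  -- key strong-convexity inequality for the minimizer d k
  have key_sc : ∀ k (e : EuclideanSpace ℝ (Fin n)), θ k + μ/2 * ‖e - d k‖^2 ≤ φ (x k) e := by
    intro k e
    have hstep : ∀ l : ℝ, 0 < l → l < 1 → θ k + μ/2*(1-l)*‖e - d k‖^2 ≤ φ (x k) e := by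
      intro l hl0 hl1
      have h1 := hdk k (l•e + (1-l)•d k)
      have h2 := hcomb k e l hl0 hl1
      have h3 : l * (θ k + μ/2*(1-l)*‖e - d k‖^2) ≤ l * φ (x k) e := by nlinarith
      exact le_of_mul_le_mul_left h3 hl0
    have hT : Tendsto (fun l : ℝ => θ k + μ/2*(1-l)*‖e - d k‖^2) (𝓝[>] (0:ℝ))
        (𝓝 (θ k + μ/2*(1-(0:ℝ))*‖e - d k‖^2)) := by
      apply Tendsto.mono_left _ nhdsWithin_le_nhds
      exact (Continuous.tendsto (by fun_prop) 0)
    have hev : ∀ᶠ l in 𝓝[>] (0:ℝ), θ k + μ/2*(1-l)*‖e - d k‖^2 ≤ φ (x k) e := by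
      filter_upwards [Ioo_mem_nhdsGT_of_mem (Set.left_mem_Ico.2 one_pos)] with l hl
      exact hstep l hl.1 hl.2
    have := le_of_tendsto hT hev
    linarith [this]
  -- θ is negative
  have hθle : ∀ k, θ k ≤ -(μ/2 * ‖d k‖^2) := by
    intro k
    have := key_sc k 0
    rw [hφ0] at this
    simp only [zero_sub, norm_neg] at this
    linarith
  have hθneg : ∀ k, θ k < 0 := by
    intro k
    have h1 := hθle k
    have h2 : 0 < ‖d k‖ := norm_pos_iff.2 (hdne k)
    have h3 : 0 < μ/2 * ‖d k‖^2 := by positivity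
    linarith
  -- line search structure
  choose jk htk harm hmin using ht
  have htpos : ∀ k, 0 < t k := fun k => (htk k) ▸ pow_pos hγ0 _
  have htle1 : ∀ k, t k ≤ 1 := fun k => (htk k) ▸ pow_le_one₀ hγ0.le hγ1.le
  have harm' : ∀ k i, F i (x (k+1)) - F i (x k) ≤ t k * (σ * θ k) := by
    intro k i
    rw [hxk k, htk k]
    exact harm k i
  have htθneg : ∀ k, t k * (σ * θ k) ≤ 0 := by
    intro k
    have h1 : 0 ≤ t k * σ * (-θ k) := mul_nonneg (mul_nonneg (htpos k).le hσ0.le) (by linarith [hθneg k])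
    nlinarith [h1]
  -- monotonicity of F along the iterates
  have hFdec : ∀ i, ∀ k l : ℕ, k ≤ l → F i (x l) ≤ F i (x k) := by
    intro i k l hkl
    induction l with
    | zero =>
      have : k = 0 := Nat.le_zero.1 hkl
      rw [this]
    | succ l ih =>
      rcases Nat.lt_or_ge k (l+1) with h | h
      · have h1 := ih (Nat.lt_succ_iff.1 h)
        have h2 := harm' l i
        have h3 := htθneg l
        linarith
      · have : k = l + 1 := le_antisymm hkl h
        rw [this]
  have hFlim : ∀ i, Tendsto (fun k => F i (x k)) atTop (𝓝 (F i xs)) :=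
    fun i => ((hFc i).tendsto xs).comp hlim
  have hFxs : ∀ i k, F i xs ≤ F i (x k) := by
    intro i k
    refine le_of_tendsto (hFlim i) ?_
    exact eventually_atTop.2 ⟨k, fun l hl => hFdec i k l hl⟩
  -- t k * θ k → 0
  have htθ : Tendsto (fun k => t k * θ k) atTop (𝓝 0) := by
    set i0 : Fin m := ⟨0, hm⟩
    have hlow : Tendsto (fun k => F i0 (x (k+1)) - F i0 (x k)) atTop (𝓝 0) := by
      have h1 : Tendsto (fun k => F i0 (x (k+1))) atTop (𝓝 (F i0 xs)) :=
        (hFlim i0).comp (tendsto_add_atTop_nat 1)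
      have := h1.sub (hFlim i0)
      simpa using this
    have hsq : Tendsto (fun k => t k * (σ * θ k)) atTop (𝓝 0) :=
      tendsto_of_tendsto_of_tendsto_of_le_of_le hlow tendsto_const_nhds
        (fun k => harm' k i0) (fun k => htθneg k)
    have heq : (fun k => t k * θ k) = fun k => σ⁻¹ * (t k * (σ * θ k)) := by
      funext k
      field_simp
    rw [heq]
    simpa using hsq.const_mul σ⁻¹
  -- radius bound for the iterates
  obtain ⟨R, hR0, hRmem⟩ : ∃ R : ℝ, 0 ≤ R ∧ ∀ k, x k ∈ Metric.closedBall xs R := by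
    obtain ⟨N, hN⟩ := Metric.tendsto_atTop.1 hlim 1 one_pos
    have hne0 : (Finset.range (N+1)).Nonempty := ⟨0, by simp⟩
    set S := (Finset.range (N+1)).sup' hne0 (fun k => dist (x k) xs) with hS
    have hS0 : 0 ≤ S :=
      le_trans dist_nonneg (Finset.le_sup' (fun k => dist (x k) xs) (Finset.mem_range.2 (Nat.succ_pos N)))
    refine ⟨1 + S, by linarith, fun k => ?_⟩
    rw [Metric.mem_closedBall]
    rcases Nat.lt_or_ge k (N+1) with h | h
    · have := Finset.le_sup' (fun k => dist (x k) xs) (Finset.mem_range.2 h)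
      linarith
    · have := hN k (by omega)
      linarith
  -- uniform bounds on compact balls
  obtain ⟨Cg, hCg0, hCg⟩ := npgmo_bound hm (Metric.closedBall xs (R+1))
    (isCompact_closedBall _ _) g hgc
  obtain ⟨C1, hC10, hC1⟩ := npgmo_bound hm (Metric.closedBall xs (R+1))
    (isCompact_closedBall _ _) (fun i z => ‖f' i z‖) (fun i => (hf'c i).norm)
  obtain ⟨CH, hCH0, hCH⟩ := npgmo_bound hm (Metric.closedBall xs (R+1))
    (isCompact_closedBall _ _) (fun i z => ‖f'' i z‖) (fun i => (hcont i).norm)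
  have hxmem : ∀ k, x k ∈ Metric.closedBall xs (R+1) := by
    intro k
    have := hRmem k
    rw [Metric.mem_closedBall] at this ⊢
    linarith
  have hxmem' : ∀ k (v : EuclideanSpace ℝ (Fin n)), ‖v‖ ≤ 1 → x k + v ∈ Metric.closedBall xs (R+1) := by
    intro k v hv
    rw [Metric.mem_closedBall]
    have h1 : dist (x k + v) xs ≤ dist (x k + v) (x k) + dist (x k) xs := dist_triangle _ _ _
    have h2 : dist (x k + v) (x k) = ‖v‖ := by
      rw [dist_eq_norm]
      simp
    have := hRmem k
    rw [Metric.mem_closedBall] at this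
    linarith
  -- lower bound for the g-increment
  have hglow : ∀ k i, -(3*Cg*max 1 ‖d k‖) ≤ g i (x k + d k) - g i (x k) := by
    intro k i
    rcases le_or_gt ‖d k‖ 1 with h | h
    · have h1 := hCg i (x k + d k) (hxmem' k (d k) h)
      have h2 := hCg i (x k) (hxmem k)
      have h3 : max 1 ‖d k‖ = 1 := max_eq_left h
      rw [h3]
      rw [abs_le] at h1 h2
      have := h1.1
      have := h2.2
      linarith
    · have hs0 : 0 < ‖d k‖ := lt_trans one_pos h
      have hss : ‖d k‖⁻¹ * ‖d k‖ = 1 := inv_mul_cancel₀ (ne_of_gt hs0)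
      have hinv0 : 0 < ‖d k‖⁻¹ := inv_pos.2 hs0
      have hinv1 : ‖d k‖⁻¹ ≤ 1 := by nlinarith
      have hv : ‖(‖d k‖⁻¹ • d k : EuclideanSpace ℝ (Fin n))‖ = 1 := by
        rw [norm_smul, Real.norm_eq_abs, abs_of_pos hinv0, hss]
      have hcx : x k + ‖d k‖⁻¹ • d k = ‖d k‖⁻¹ • (x k + d k) + (1 - ‖d k‖⁻¹) • (x k) := by
        module
      have hconv := (hg i).2 (Set.mem_univ (x k + d k)) (Set.mem_univ (x k))
        (show (0:ℝ) ≤ ‖d k‖⁻¹ from hinv0.le) (show (0:ℝ) ≤ 1 - ‖d k‖⁻¹ by linarith)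
        (show ‖d k‖⁻¹ + (1 - ‖d k‖⁻¹) = 1 by ring)
      rw [← hcx] at hconv
      simp only [smul_eq_mul] at hconv
      have h1 := hCg i (x k + ‖d k‖⁻¹ • d k) (hxmem' k _ (le_of_eq hv))
      have h2 := hCg i (x k) (hxmem k)
      rw [abs_le] at h1 h2
      have hmax : max 1 ‖d k‖ = ‖d k‖ := max_eq_right h.le
      rw [hmax]
      have hmul := mul_le_mul_of_nonneg_left hconv hs0.le
      have hexp : ‖d k‖ * (‖d k‖⁻¹ * g i (x k + d k) + (1 - ‖d k‖⁻¹) * g i (x k))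
          = g i (x k + d k) + (‖d k‖ - 1) * g i (x k) := by
        field_simp
      rw [hexp] at hmul
      have hm1 := mul_le_mul_of_nonneg_left h1.1 hs0.le
      have hm2 := mul_le_mul_of_nonneg_left h2.2 (show (0:ℝ) ≤ ‖d k‖ - 1 by linarith)
      have hm3 : 0 ≤ Cg * ‖d k‖ := mul_nonneg hCg0 hs0.le
      nlinarith [hm1, hm2, hm3, hmul, h2.1, h2.2]
  -- uniform bound on the directions
  obtain ⟨D, hD1, hD⟩ : ∃ D : ℝ, 1 ≤ D ∧ ∀ k, ‖d k‖ ≤ D := by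
    refine ⟨max 1 (2*(C1+3*Cg)/μ), le_max_left _ _, fun k => ?_⟩
    rcases le_or_gt ‖d k‖ 1 with h | h
    · exact le_trans h (le_max_left _ _)
    · have h1 := hble (x k) (d k) ⟨0, hm⟩
      simp only [hbr] at h1
      have h2 : θ k < 0 := hθneg k
      have hinner : -(C1 * ‖d k‖) ≤ ⟪f' ⟨0, hm⟩ (x k), d k⟫ := by
        have ha := abs_real_inner_le_norm (f' ⟨0, hm⟩ (x k)) (d k)
        have hb := hC1 ⟨0, hm⟩ (x k) (hxmem k)
        rw [abs_of_nonneg (norm_nonneg _)] at hb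
        have hc := mul_le_mul_of_nonneg_right hb (norm_nonneg (d k))
        rw [abs_le] at ha
        linarith [ha.1]
      have hquad := hsc ⟨0, hm⟩ (x k) (d k)
      have hgl := hglow k ⟨0, hm⟩
      rw [max_eq_right h.le] at hgl
      have hθφ : θ k = φ (x k) (d k) := rfl
      rw [← hθφ] at h1
      have hkey : μ/2 * ‖d k‖^2 ≤ (C1 + 3*Cg) * ‖d k‖ := by nlinarith
      have : ‖d k‖ ≤ 2*(C1+3*Cg)/μ := by
        rw [le_div_iff₀ hμ]
        nlinarith
      exact le_trans this (le_max_right _ _)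
  -- uniform second-order Taylor estimate
  have hRT : ∀ ε : ℝ, 0 < ε → ∃ δ : ℝ, 0 < δ ∧ δ ≤ 1 ∧ ∀ i, ∀ z ∈ Metric.closedBall xs (R+1),
      ∀ u : EuclideanSpace ℝ (Fin n), ‖u‖ ≤ δ →
      |f i (z+u) - f i z - ⟪f' i z, u⟫ - (1/2) * ⟪u, f'' i z u⟫| ≤ ε * ‖u‖^2 := by
    intro ε hε
    have huc : ∀ i, ∃ δ : ℝ, 0 < δ ∧ ∀ z ∈ Metric.closedBall xs (R+2),
        ∀ w ∈ Metric.closedBall xs (R+2), dist w z < δ → ‖f'' i w - f'' i z‖ ≤ ε := by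
      intro i
      have huc' := (isCompact_closedBall xs (R+2)).uniformContinuousOn_of_continuous ((hcont i).continuousOn)
      rw [Metric.uniformContinuousOn_iff] at huc'
      obtain ⟨δ, hδ0, hδ⟩ := huc' ε hε
      refine ⟨δ, hδ0, fun z hz w hw hdist => ?_⟩
      have h2 := hδ w hw z hz hdist
      rw [dist_eq_norm] at h2
      exact h2.le
    choose δf hδf0 hδf using huc
    have hinf0 : 0 < Finset.univ.inf' hne' δf := by
      rw [Finset.lt_inf'_iff]
      exact fun i _ => hδf0 i
    set δ := min 1 ((Finset.univ.inf' hne' δf)/2) with hδdef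
    have hδ0 : 0 < δ := lt_min one_pos (by linarith)
    refine ⟨δ, hδ0, min_le_left _ _, fun i z hz u hu => ?_⟩
    apply npgmo_taylor_aux (f i) (f' i) (f'' i) (hgrad i) (hhess i) z u (le_of_lt hε)
    intro w hw
    obtain ⟨a, b, ha, hb, hab, hw'⟩ := hw
    have ha' : a = 1 - b := by linarith
    have hb1 : b ≤ 1 := by linarith
    have hwz : w - z = b • u := by
      rw [← hw', ha']
      module
    have hwnorm : ‖w - z‖ ≤ ‖u‖ := by
      rw [hwz, norm_smul, Real.norm_eq_abs, abs_of_nonneg hb]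
      nlinarith [norm_nonneg u]
    rw [Metric.mem_closedBall] at hz
    have hzK : z ∈ Metric.closedBall xs (R+2) := by
      rw [Metric.mem_closedBall]
      linarith
    have hwK : w ∈ Metric.closedBall xs (R+2) := by
      rw [Metric.mem_closedBall]
      have h1 : dist w xs ≤ dist w z + dist z xs := dist_triangle _ _ _
      have h2 : dist w z = ‖w - z‖ := dist_eq_norm _ _
      have h3 : δ ≤ 1 := min_le_left _ _
      linarith [hwnorm]
    apply hδf i z hzK w hwK
    have h4 : δ < δf i := by
      have h5 : δ ≤ (Finset.univ.inf' hne' δf)/2 := min_le_right _ _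
      have h6 : Finset.univ.inf' hne' δf ≤ δf i := Finset.inf'_le δf (Finset.mem_univ i)
      linarith
    rw [dist_eq_norm]
    linarith [hwnorm, hu]
  have hθeq : ∀ k, φ (x k) (d k) = θ k := fun _ => rfl
  have hD0 : (0:ℝ) < D := lt_of_lt_of_le one_pos hD1
  -- Claim A : steps are bounded below while the directions stay large
  have hclaimA : ∀ ε : ℝ, 0 < ε → ∃ τ : ℝ, 0 < τ ∧ ∀ k, ε ≤ ‖d k‖ → τ ≤ t k := by
    intro ε hε
    obtain ⟨δ1, hδ10, hδ11, hδ1⟩ := hRT 1 one_pos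
    set τ := min (δ1/(D+1)) ((μ*ε^2/4)/(CH*D^2/2 + D^2 + 1)) with hτdef
    have hτ0 : 0 < τ := lt_min (by positivity) (by positivity)
    have hgood : ∀ k, ε ≤ ‖d k‖ → ∀ j : ℕ, γ^j ≤ τ →
        ∀ i, F i (x k + γ^j • d k) - F i (x k) ≤ γ^j * (σ * φ (x k) (d k)) := by
      intro k hdk' j hjτ i
      rw [hθeq]
      set t' := (γ:ℝ)^j with ht'def
      have ht'0 : 0 < t' := pow_pos hγ0 j
      have ht'1 : t' ≤ 1 := pow_le_one₀ hγ0.le hγ1.le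
      have hu : ‖t' • d k‖ ≤ δ1 := by
        rw [norm_smul, Real.norm_eq_abs, abs_of_pos ht'0]
        have s1 : t' * ‖d k‖ ≤ τ * D := mul_le_mul hjτ (hD k) (norm_nonneg _) hτ0.le
        have s2 : τ * D ≤ (δ1/(D+1)) * D := mul_le_mul_of_nonneg_right (min_le_left _ _) hD0.le
        have s3 : (δ1/(D+1)) * D ≤ δ1 := by
          rw [div_mul_eq_mul_div, div_le_iff₀ (by linarith)]
          nlinarith
        linarith
      have htay := hδ1 i (x k) (hxmem k) (t' • d k) hu
      have hi1 : ⟪f' i (x k), t' • d k⟫ = t' * ⟪f' i (x k), d k⟫ := real_inner_smul_right _ _ _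
      have hi2 : ⟪t' • d k, f'' i (x k) (t' • d k)⟫ = t'^2 * ⟪d k, f'' i (x k) (d k)⟫ := by
        rw [(f'' i (x k)).map_smul, real_inner_smul_left, real_inner_smul_right]
        ring
      have hnrm : ‖t' • d k‖^2 = t'^2 * ‖d k‖^2 := by
        rw [norm_smul, Real.norm_eq_abs, mul_pow, sq_abs]
      rw [hi1, hi2, hnrm, abs_le] at htay
      have hf_up := htay.2
      have hgcv : g i (x k + t' • d k) - g i (x k) ≤ t' * (g i (x k + d k) - g i (x k)) := by
        have hpt : x k + t' • d k = t' • (x k + d k) + (1 - t') • x k := by module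
        have hcv := (hg i).2 (Set.mem_univ (x k + d k)) (Set.mem_univ (x k))
          (show (0:ℝ) ≤ t' from ht'0.le) (show (0:ℝ) ≤ 1 - t' by linarith)
          (show t' + (1 - t') = 1 by ring)
        rw [← hpt] at hcv
        simp only [smul_eq_mul] at hcv
        linarith
      have hbrθ := hble (x k) (d k) i
      simp only [hbr] at hbrθ
      rw [hθeq] at hbrθ
      have hHb : ⟪d k, f'' i (x k) (d k)⟫ ≤ CH * D^2 := by
        have b1 := real_inner_le_norm (d k) (f'' i (x k) (d k))
        have b2 := (f'' i (x k)).le_opNorm (d k)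
        have b3 := hCH i (x k) (hxmem k)
        rw [abs_of_nonneg (norm_nonneg _)] at b3
        have b4 : ‖(f'' i (x k)) (d k)‖ ≤ CH * ‖d k‖ :=
          le_trans b2 (mul_le_mul_of_nonneg_right b3 (norm_nonneg _))
        have b5 : ‖d k‖ * ‖(f'' i (x k)) (d k)‖ ≤ ‖d k‖ * (CH * ‖d k‖) :=
          mul_le_mul_of_nonneg_left b4 (norm_nonneg _)
        have b6 : ‖d k‖ * ‖d k‖ ≤ D * D :=
          mul_le_mul (hD k) (hD k) (norm_nonneg _) (by linarith)
        have b7 := mul_le_mul_of_nonneg_left b6 hCH0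
        nlinarith [b1, b5, b7]
      have hq := hsc i (x k) (d k)
      have hq2 : μ * ε^2 ≤ ⟪d k, f'' i (x k) (d k)⟫ := by
        have q1 : ε*ε ≤ ‖d k‖*‖d k‖ := mul_le_mul hdk' hdk' hε.le (norm_nonneg _)
        have q2 := mul_le_mul_of_nonneg_left q1 hμ.le
        refine le_trans ?_ hq
        nlinarith [q2]
      have q4 : ‖d k‖^2 ≤ D^2 := pow_le_pow_left₀ (norm_nonneg _) (hD k) 2
      have hq3 : (1/2)*⟪d k, f'' i (x k) (d k)⟫ + ‖d k‖^2 ≤ CH*D^2/2 + D^2 := by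
        linarith only [hHb, q4]
      have hA : ⟪f' i (x k), d k⟫ + (g i (x k + d k) - g i (x k))
          ≤ θ k - (1/2)*⟪d k, f'' i (x k) (d k)⟫ := by linarith
      have m1 := mul_le_mul_of_nonneg_left hA ht'0.le
      have m6 := mul_le_mul_of_nonneg_left hq2 ht'0.le
      have m2 : t'^2 * ((1/2)*⟪d k, f'' i (x k) (d k)⟫ + ‖d k‖^2)
          ≤ (t' * τ) * (CH*D^2/2 + D^2) := by
        have n1 : t'^2 ≤ t' * τ := by
          rw [sq]
          exact mul_le_mul_of_nonneg_left hjτ ht'0.le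
        have n2' : (0:ℝ) ≤ μ*‖d k‖^2 := by positivity
        have n2 : (0:ℝ) ≤ (1/2)*⟪d k, f'' i (x k) (d k)⟫ + ‖d k‖^2 := by
          linarith only [hq, n2', sq_nonneg ‖d k‖]
        exact mul_le_mul n1 hq3 n2 (by positivity)
      have m3 : (t' * τ) * (CH*D^2/2 + D^2) ≤ t' * (μ*ε^2/4) := by
        have hpos : (0:ℝ) < CH*D^2/2 + D^2 + 1 := by positivity
        have hτle : τ ≤ (μ*ε^2/4)/(CH*D^2/2 + D^2 + 1) := min_le_right _ _
        rw [le_div_iff₀ hpos] at hτle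
        have n3 : τ * (CH*D^2/2 + D^2) ≤ μ*ε^2/4 := by linarith only [hτle, hτ0]
        have n4 := mul_le_mul_of_nonneg_left n3 ht'0.le
        linarith only [n4]
      have m4 : t' * θ k - t' * (μ*ε^2/2) + t' * (μ*ε^2/4) ≤ t' * (σ * θ k) := by
        have h7 : (1-σ) * θ k ≤ 0 :=
          mul_nonpos_of_nonneg_of_nonpos (by linarith) (hθneg k).le
        have h8 := mul_nonpos_of_nonneg_of_nonpos ht'0.le h7
        have h9 : 0 ≤ t' * (μ*ε^2/4) := by positivity
        linarith only [h8, h9]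
      have hFd : F i (x k + t' • d k) - F i (x k)
          = (f i (x k + t' • d k) - f i (x k)) + (g i (x k + t' • d k) - g i (x k)) := by
        rw [hF, hF]
        ring
      rw [hFd]
      linarith only [hf_up, hgcv, m1, m6, m2, m3, m4]
    obtain ⟨j₀, hj₀⟩ := exists_pow_lt_of_lt_one hτ0 hγ1
    refine ⟨γ^j₀, pow_pos hγ0 j₀, fun k hdk' => ?_⟩
    have hjk : jk k ≤ j₀ := by
      by_contra hcon
      push_neg at hcon
      exact (hmin k j₀ hcon) (hgood k hdk' j₀ hj₀.le)
    rw [htk k]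
    exact Bound.pow_le_pow_right_of_le_one_or_one_le (Or.inr ⟨hγ0.le, hγ1.le, hjk⟩)
  -- the directions tend to zero
  have hdsmall : ∀ ε : ℝ, 0 < ε → ∀ᶠ k in atTop, ‖d k‖ < ε := by
    intro ε hε
    obtain ⟨τ, hτ0, hτ⟩ := hclaimA ε hε
    obtain ⟨N, hN⟩ := Metric.tendsto_atTop.1 htθ (τ*(μ/2*ε^2)) (by positivity)
    rw [eventually_atTop]
    refine ⟨N, fun k hk => ?_⟩
    by_contra hcon
    push_neg at hcon
    have h3 := hτ k hcon
    have h4 : t k * θ k ≤ τ * θ k := mul_le_mul_of_nonpos_right h3 (hθneg k).le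
    have h5 : θ k ≤ -(μ/2*ε^2) := by
      have q1 : ε^2 ≤ ‖d k‖^2 := pow_le_pow_left₀ hε.le hcon 2
      have q2 := mul_le_mul_of_nonneg_left q1 (by linarith : (0:ℝ) ≤ μ/2)
      linarith only [hθle k, q2]
    have h6 : τ * θ k ≤ τ * (-(μ/2*ε^2)) := mul_le_mul_of_nonneg_left h5 hτ0.le
    have h7 := hN k hk
    rw [Real.dist_eq, sub_zero, abs_lt] at h7
    linarith only [h4, h6, h7.1]
  -- eventually the full step is accepted
  have ht1 : ∀ᶠ k in atTop, t k = 1 := by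
    obtain ⟨δ2, hδ20, hδ21, hδ2⟩ := hRT ((1-σ)*μ/2) (by nlinarith)
    filter_upwards [hdsmall δ2 hδ20] with k hk
    have hgood0 : ∀ i, F i (x k + γ^0 • d k) - F i (x k) ≤ γ^0 * (σ * φ (x k) (d k)) := by
      intro i
      rw [pow_zero, one_smul, hθeq]
      have htay := hδ2 i (x k) (hxmem k) (d k) hk.le
      rw [abs_le] at htay
      have hf_up := htay.2
      have hbrθ := hble (x k) (d k) i
      simp only [hbr] at hbrθ
      rw [hθeq] at hbrθ
      have h1 := hθle k
      have h2 : (1-σ)*(μ/2*‖d k‖^2) ≤ (1-σ)*(-θ k) :=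
        mul_le_mul_of_nonneg_left (by linarith) (by linarith)
      have hFd : F i (x k + d k) - F i (x k)
          = (f i (x k + d k) - f i (x k)) + (g i (x k + d k) - g i (x k)) := by
        rw [hF, hF]
        ring
      rw [hFd]
      linarith only [hf_up, hbrθ, h2]
    have hj0 : jk k = 0 := by
      by_contra hc
      exact hmin k 0 (Nat.pos_of_ne_zero hc) hgood0
    rw [htk k, hj0, pow_zero]
  constructor
  · -- superlinear convergence
    rw [Metric.tendsto_atTop]
    intro ε' hε'
    set ε := min (μ/8) (μ*ε'^2/24) with hεdef
    have hε0 : 0 < ε := lt_min (by positivity) (by positivity)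
    obtain ⟨δ3, hδ30, hδ31, hδ3⟩ := hRT ε hε0
    have E3 : ∀ᶠ k in atTop, ‖x k - xs‖ ≤ δ3 := by
      obtain ⟨N, hN⟩ := Metric.tendsto_atTop.1 hlim δ3 hδ30
      rw [eventually_atTop]
      exact ⟨N, fun k hk => by
        have := hN k hk
        rw [dist_eq_norm] at this
        exact this.le⟩
    obtain ⟨N, hN⟩ := eventually_atTop.1 ((ht1.and ((hdsmall δ3 hδ30).and E3)))
    refine ⟨N, fun k hk => ?_⟩
    obtain ⟨h1, h2, h3⟩ := hN k hk
    have hb0 : 0 < ‖x k - xs‖ := norm_pos_iff.2 (sub_ne_zero.2 (hne k))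
    have hx1 : x (k+1) = x k + d k := by rw [hxk k, h1, one_smul]
    have key := key_sc k (xs - x k)
    have e1 : ‖(xs - x k) - d k‖ = ‖x (k+1) - xs‖ := by
      rw [hx1, show (xs - x k) - d k = -(x k + d k - xs) by abel]
      exact norm_neg _
    rw [e1] at key
    have hbrev : ‖xs - x k‖ = ‖x k - xs‖ := norm_sub_rev _ _
    -- upper bound for φ (x k) (xs - x k)
    have hup : φ (x k) (xs - x k)
        ≤ (Finset.univ.sup' hne' (fun i => F i (x (k+1)) - F i (x k))) + ε * ‖x k - xs‖^2 := by
      rw [hφ']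
      apply Finset.sup'_le
      intro i _
      simp only [hbr]
      have htay := hδ3 i (x k) (hxmem k) (xs - x k) (by rw [hbrev]; exact h3)
      rw [abs_le] at htay
      have hxs : x k + (xs - x k) = xs := by abel
      rw [hxs] at htay
      rw [hxs]
      have hFi : F i xs - F i (x k) = (f i xs - f i (x k)) + (g i xs - g i (x k)) := by
        rw [hF, hF]
        ring
      have hFle : F i xs ≤ F i (x (k+1)) := hFxs i (k+1)
      have hsup := Finset.le_sup' (fun i => F i (x (k+1)) - F i (x k)) (Finset.mem_univ i)
      rw [hbrev] at htay
      linarith only [htay.1, hFle, hsup, hFi]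
    -- lower bound for θ k
    have hlo : (Finset.univ.sup' hne' (fun i => F i (x (k+1)) - F i (x k))) - ε * ‖d k‖^2
        ≤ θ k := by
      obtain ⟨i₁, hmem, hieq⟩ := Finset.exists_mem_eq_sup' hne' (fun i => F i (x (k+1)) - F i (x k))
      rw [hieq]
      have htay := hδ3 i₁ (x k) (hxmem k) (d k) h2.le
      rw [abs_le] at htay
      have hbrθ := hble (x k) (d k) i₁
      simp only [hbr] at hbrθ
      rw [hθeq] at hbrθ
      have hFi : F i₁ (x (k+1)) - F i₁ (x k)
          = (f i₁ (x k + d k) - f i₁ (x k)) + (g i₁ (x k + d k) - g i₁ (x k)) := by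
        rw [hx1, hF, hF]
        ring
      linarith only [htay.2, hbrθ, hFi]
    -- combine
    have hmain0 : μ/2 * ‖x (k+1) - xs‖^2 ≤ ε * (‖x k - xs‖^2 + ‖d k‖^2) := by
      linarith only [key, hup, hlo]
    have hdab : ‖d k‖ ≤ ‖x (k+1) - xs‖ + ‖x k - xs‖ := by
      rw [show d k = (x (k+1) - xs) - (x k - xs) by rw [hx1]; abel]
      exact norm_sub_le _ _
    have hd2 : ‖d k‖^2 ≤ 2*‖x (k+1) - xs‖^2 + 2*‖x k - xs‖^2 := by
      have q1 : ‖d k‖^2 ≤ (‖x (k+1) - xs‖ + ‖x k - xs‖)^2 :=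
        pow_le_pow_left₀ (norm_nonneg _) hdab 2
      nlinarith [q1, sq_nonneg (‖x (k+1) - xs‖ - ‖x k - xs‖)]
    have hmain : μ/2 * ‖x (k+1) - xs‖^2 ≤ ε*(3*‖x k - xs‖^2 + 2*‖x (k+1) - xs‖^2) := by
      have q2 := mul_le_mul_of_nonneg_left hd2 hε0.le
      linarith only [hmain0, q2]
    have hε1 : ε ≤ μ/8 := min_le_left _ _
    have hε2 : ε ≤ μ*ε'^2/24 := min_le_right _ _
    have p1 : ε * ‖x (k+1) - xs‖^2 ≤ μ/8 * ‖x (k+1) - xs‖^2 :=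
      mul_le_mul_of_nonneg_right hε1 (sq_nonneg _)
    have p2 : ε * ‖x k - xs‖^2 ≤ μ*ε'^2/24 * ‖x k - xs‖^2 :=
      mul_le_mul_of_nonneg_right hε2 (sq_nonneg _)
    have h10 : μ * (‖x (k+1) - xs‖^2/4) ≤ μ * (ε'^2*‖x k - xs‖^2/8) := by
      linarith only [hmain, p1, p2]
    have h11 := le_of_mul_le_mul_left h10 hμ
    have h12 : ‖x (k+1) - xs‖^2 < (ε' * ‖x k - xs‖)^2 := by
      have q3 : 0 < ε'^2 * ‖x k - xs‖^2 := by positivity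
      nlinarith [h11, q3]
    have h13 : ‖x (k+1) - xs‖ < ε' * ‖x k - xs‖ :=
      lt_of_pow_lt_pow_left₀ 2 (by positivity) h12
    rw [Real.dist_eq, sub_zero, abs_of_nonneg (by positivity)]
    rw [div_lt_iff₀ hb0]
    linarith only [h13]
  · obtain ⟨K, hK⟩ := eventually_atTop.1 ht1
    exact ⟨K, hK⟩
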